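/- Let H be a verbally closed subgroup of a free product G = G₁ * ⋯ * Gₙ of nontrivial finite groups, with Kurosh decomposition H = F * (free product of conjugates g_{i,j} H_{i,j} g_{i,j}⁻¹ with 1 ≠ H_{i,j} ≤ Gᵢ), where F is free. Then F is trivial. -/

import Mathlib

open Monoid

/-!
A free product of finite groups is generated by elements of finite order, so each of its
elements is a product `t₁ ⋯ tₘ` with `tₖ ^ N = 1` for a common `N > 0`. Then `tₖ ^ (N + 1) = tₖ`,
so the equation `x₁ ^ (N + 1) ⋯ xₘ ^ (N + 1) = f` is solvable in `G` for every `f`. If `f` is a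
free generator of `F`, verbal closure gives a solution in `H = F * ∗ⱼ Bⱼ`, and applying the
exponent-sum homomorphism `H → ℤ` of `F` (trivial on the `Bⱼ`) shows `N + 1 ∣ 1`, absurd.
-/

/-- A subgroup `H` of `G` is *verbally closed* if every coefficient-free equation
`w(x₁,…,xₙ) = h` with `h ∈ H` that has a solution in `G` also has a solution in `H`. -/
def VerballyClosed {G : Type*} [Group G] (H : Subgroup G) : Prop :=
  ∀ (n : ℕ) (w : FreeGroup (Fin n)) (h : G), h ∈ H →
    (∃ x : Fin n → G, FreeGroup.lift x w = h) →
    ∃ x : Fin n → G, (∀ i, x i ∈ H) ∧ FreeGroup.lift x w = h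

theorem List.exists_pos_forall_pow_eq_one {M : Type*} [Monoid M] {L : List M}
    (hL : ∀ t ∈ L, IsOfFinOrder t) : ∃ N, 0 < N ∧ ∀ t ∈ L, t ^ N = 1 := by
  refine ⟨(L.map orderOf).prod, ?_, fun t ht => ?_⟩
  · exact List.prod_pos fun n hn => by
      obtain ⟨t, ht, rfl⟩ := List.mem_map.mp hn
      exact (hL t ht).orderOf_pos
  · exact orderOf_dvd_iff_pow_eq_one.mp (List.dvd_prod (List.mem_map_of_mem ht))

theorem CoprodI.closure_isOfFinOrder_eq_top {ι : Type*} {G : ι → Type*} [∀ i, Group (G i)]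
    (hG : ∀ i, IsMulTorsion (G i)) :
    Submonoid.closure {t : CoprodI G | IsOfFinOrder t} = ⊤ := by
  refine (Submonoid.eq_top_iff' _).mpr fun z => ?_
  induction z using CoprodI.induction_on with
  | one => exact one_mem _
  | of i g => exact Submonoid.subset_closure (CoprodI.of.isOfFinOrder (hG i g))
  | mul x y hx hy => exact mul_mem hx hy

theorem CoprodI.exists_list_prod_eq_of_isMulTorsion {ι : Type*} {G : ι → Type*}
    [∀ i, Group (G i)] (hG : ∀ i, IsMulTorsion (G i)) (z : CoprodI G) :
    ∃ (L : List (CoprodI G)) (N : ℕ), 0 < N ∧ (∀ t ∈ L, t ^ N = 1) ∧ L.prod = z := by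
  have hz : z ∈ Submonoid.closure {t : CoprodI G | IsOfFinOrder t} := by
    rw [closure_isOfFinOrder_eq_top hG]; trivial
  obtain ⟨L, hL, rfl⟩ := Submonoid.exists_list_of_mem_closure hz
  obtain ⟨N, hN, hpow⟩ := List.exists_pos_forall_pow_eq_one hL
  exact ⟨L, N, hN, hpow, rfl⟩

def powProdWord (m e : ℕ) : FreeGroup (Fin m) :=
  (List.ofFn fun i => FreeGroup.of i ^ e).prod

theorem lift_powProdWord {M : Type*} [Group M] {m : ℕ} (e : ℕ) (x : Fin m → M) :
    FreeGroup.lift x (powProdWord m e) = (List.ofFn fun i => x i ^ e).prod := by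
  simp [powProdWord, map_list_prod, List.map_ofFn, Function.comp_def]

/-- Since `t ^ (N + 1) = t` for `t ∈ L`, the equation `powProdWord _ (N + 1) = z` is solved in
`M` by `L`, hence in `H`. -/
theorem VerballyClosed.exists_prod_pow_eq {M : Type*} [Group M] {H : Subgroup M}
    (hH : VerballyClosed H) {L : List M} {N : ℕ} (hN : ∀ t ∈ L, t ^ N = 1) {z : H}
    (hL : L.prod = z) :
    ∃ y : Fin L.length → H, (List.ofFn fun i => y i ^ (N + 1)).prod = z := by
  have hsol : FreeGroup.lift (fun i : Fin L.length => L[(i : ℕ)])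
      (powProdWord L.length (N + 1)) = L.prod := by
    have hfix : ∀ t ∈ L, t ^ (N + 1) = t := fun t ht => by rw [pow_succ, hN t ht, one_mul]
    rw [lift_powProdWord, List.ofFn_getElem_eq_map L (· ^ (N + 1)), List.map_congr_left hfix,
      List.map_id']
  obtain ⟨y, hyH, hy⟩ := hH _ _ _ (hL ▸ z.2) ⟨_, hsol⟩
  refine ⟨fun i => ⟨y i, hyH i⟩, Subtype.ext ?_⟩
  rw [← hL, ← hy, lift_powProdWord, SubmonoidClass.coe_list_prod]
  simp [List.map_ofFn, Function.comp_def]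

theorem dvd_toAdd_map_prod_pow {A : Type*} [Group A] (ψ : A →* Multiplicative ℤ)
    {m : ℕ} (e : ℕ) (k : Fin m → A) :
    (e : ℤ) ∣ (ψ (List.ofFn fun i => k i ^ e).prod).toAdd := by
  rw [map_list_prod, List.map_ofFn, List.prod_ofFn]
  simp only [Function.comp_apply, map_pow, Finset.prod_pow, toAdd_pow, nsmul_eq_mul]
  exact dvd_mul_right _ _

theorem CoprodI.prod_pow_ne_of_free_generator {I : Type*} {B : I → Type*} [∀ i, Group (B i)]
    {i : I} {X : Type*} (eF : B i ≃* FreeGroup X) (x : X) {m e : ℕ} (he : 2 ≤ e)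
    (k : Fin m → CoprodI B) :
    (List.ofFn fun j => k j ^ e).prod ≠ CoprodI.of (eF.symm (FreeGroup.of x)) := by
  classical
  intro h
  -- the exponent sum on the free factor, killing the other factors
  let ψ : CoprodI B →* Multiplicative ℤ := CoprodI.lift
    (Pi.mulSingle i ((FreeGroup.lift fun _ => Multiplicative.ofAdd 1).comp eF.toMonoidHom))
  have hψ : (ψ (CoprodI.of (eF.symm (FreeGroup.of x)))).toAdd = 1 := by
    simp [ψ]
  have hdvd := dvd_toAdd_map_prod_pow ψ e k
  rw [h, hψ] at hdvd
  have := Int.le_of_dvd one_pos hdvd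
  omega

theorem Subgroup.nonempty_of_ne_bot_of_mulEquiv_freeGroup {M X : Type*} [Group M]
    {F : Subgroup M} (hF : F ≠ ⊥) (eF : F ≃* FreeGroup X) : Nonempty X := by
  by_contra hX
  have : IsEmpty X := not_nonempty_iff.mp hX
  have : Subsingleton F := eF.toEquiv.subsingleton
  exact hF (Subgroup.eq_bot_of_subsingleton F)

theorem kurosh_free_part_trivial_general {ι : Type*}
    (G : ι → Type*) [∀ i, Group (G i)] [∀ i, Finite (G i)]
    (H : Subgroup (CoprodI G)) (hvc : VerballyClosed H)
    (J : Type*) (B : Option J → Subgroup (CoprodI G))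
    (X : Type*) (eF : B none ≃* FreeGroup X)
    (hinj : Function.Injective (CoprodI.lift (fun o => (B o).subtype)))
    (hrange : (CoprodI.lift (fun o => (B o).subtype)).range = H) :
    B none = ⊥ := by
  by_contra hbot
  obtain ⟨x⟩ := Subgroup.nonempty_of_ne_bot_of_mulEquiv_freeGroup hbot eF
  let eH : CoprodI (fun o => B o) ≃* H :=
    (MonoidHom.ofInjective hinj).trans (MulEquiv.subgroupCongr hrange)
  let f : CoprodI (fun o => B o) := CoprodI.of (eF.symm (FreeGroup.of x))
  obtain ⟨L, N, hN, hpow, hL⟩ := CoprodI.exists_list_prod_eq_of_isMulTorsion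
    (fun _ => isMulTorsion_of_finite) (eH f : CoprodI G)
  obtain ⟨y, hy⟩ := hvc.exists_prod_pow_eq hpow hL
  refine CoprodI.prod_pow_ne_of_free_generator eF x (by omega : 2 ≤ N + 1)
    (fun i => eH.symm (y i)) ?_
  apply eH.injective
  simpa [map_list_prod, List.map_ofFn, Function.comp_def] using hy

/-- In the Kurosh decomposition `H = F * (∗ⱼ gⱼ Hⱼ gⱼ⁻¹)` of a verbally closed
subgroup `H` of a free product `G₁ * ⋯ * Gₙ` of nontrivial finite groups
(`F` free, each `Hⱼ` a nontrivial subgroup of some factor `Gᵢ`), the free part `F`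
is trivial. -/
theorem kurosh_free_part_trivial {ι : Type*} [Fintype ι]
    (G : ι → Type*) [∀ i, Group (G i)] [∀ i, Finite (G i)] [∀ i, Nontrivial (G i)]
    (H : Subgroup (CoprodI G)) (hvc : VerballyClosed H)
    (J : Type*) (B : Option J → Subgroup (CoprodI G))
    (X : Type*) (eF : B none ≃* FreeGroup X)
    (hconj : ∀ j : J, ∃ (i : ι) (K : Subgroup (G i)) (c : CoprodI G), K ≠ ⊥ ∧
      B (some j) = (K.map (CoprodI.of (M := G))).map (MulAut.conj c).toMonoidHom)
    (hinj : Function.Injective (CoprodI.lift (fun o => (B o).subtype)))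
    (hrange : (CoprodI.lift (fun o => (B o).subtype)).range = H) :
    B none = ⊥ :=
  kurosh_free_part_trivial_general G H hvc J B X eF hinj hrange
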